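/- (Znám's theorem) Let a_1 (mod m_1), …, a_N (mod m_N) be residue classes that are pairwise disjoint and whose union is all of ℤ (an exact covering system), with M = lcm(m_1, …, m_N) ≥ 2, and let p be the smallest prime dividing M. Then the largest modulus max_i m_i is attained by at least p of the residue classes. -/

import Mathlib

/-!
Let `n` be the largest modulus and `ζ` a primitive `n`-th root of unity. Summing `ζ ^ k` over a
full period `0 ≤ k < M` and splitting the sum along the exact cover, every progression of modulus
`mᵢ < n` contributes a vanishing geometric sum, so the classes of modulus `n` give a vanishing sum
`∑ ζ ^ bᵢ = 0` of `n`-th roots of unity. Such a sum has at least `minFac n ≥ p` terms: normalise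
one term to `1` and take the trace from `ℚ(ζ)` to `ℚ`. The terms equal to `1` have trace `φ n`,
while an `n`-th root of unity of order `d > 1` has trace `φ n * μ d / φ d`, of absolute value at
most `φ n / (minFac n - 1)`. So if `k ≥ 1` of the `s` terms equal `1`, then
`(minFac n - 1) * k ≤ s - k`.
-/

open Finset Polynomial ArithmeticFunction
open scoped ArithmeticFunction.Moebius Nat

theorem IsPrimitiveRoot.sum_nthRootsFinset_one {R : Type*} [CommRing R] [IsDomain R]
    {ζ : R} {n : ℕ} (hζ : IsPrimitiveRoot ζ n) :
    ∑ x ∈ nthRootsFinset n (1 : R), x = ∑ k ∈ range n, ζ ^ k := by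
  classical
  rw [nthRootsFinset, ← Multiset.toFinset_eq hζ.nthRoots_one_nodup, Finset.sum_mk,
    hζ.nthRoots_eq (one_pow n)]
  simp [Finset.sum]

theorem Complex.sum_nthRootsFinset_one {n : ℕ} (hn : 0 < n) :
    ∑ x ∈ nthRootsFinset n (1 : ℂ), x = if n = 1 then 1 else 0 := by
  have hζ := Complex.isPrimitiveRoot_exp n hn.ne'
  rw [hζ.sum_nthRootsFinset_one]
  split_ifs with h1
  · simp [h1]
  · exact hζ.geom_sum_eq_zero (by omega)

theorem Complex.sum_primitiveRoots_eq_moebius (n : ℕ) : ∑ ξ ∈ primitiveRoots n ℂ, ξ = μ n := by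
  classical
  rcases n.eq_zero_or_pos with rfl | hn
  · simp
  have hsum : ∀ n > 0, ∑ d ∈ n.divisors, ∑ ξ ∈ primitiveRoots d ℂ, ξ =
      if n = 1 then (1 : ℂ) else 0 := fun n hn => by
    rw [← sum_nthRootsFinset_one hn, IsPrimitiveRoot.nthRoots_one_eq_biUnion_primitiveRoots,
      sum_biUnion fun _ _ _ _ h => IsPrimitiveRoot.disjoint h]
  rw [← sum_eq_iff_sum_mul_moebius_eq.mp hsum n hn, Nat.sum_divisorsAntidiagonal'
    (fun a b => (μ a : ℂ) * if b = 1 then 1 else 0)]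
  simp [hn.ne']

theorem IsPrimitiveRoot.sum_units_pow_val_eq_sum_primitiveRoots {R : Type*} [CommRing R]
    [IsDomain R] {η : R} {d : ℕ} [NeZero d] (hη : IsPrimitiveRoot η d) :
    ∑ u : (ZMod d)ˣ, η ^ (u : ZMod d).val = ∑ ξ ∈ primitiveRoots d R, ξ := by
  refine sum_nbij (fun u => η ^ (u : ZMod d).val) (fun u _ => ?_) (fun u _ v _ huv => ?_)
    (fun ξ hξ => ?_) (fun _ _ => rfl)
  · exact (mem_primitiveRoots (NeZero.pos d)).mpr
      (hη.pow_of_coprime _ (ZMod.val_coe_unit_coprime u))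
  · exact Units.ext (ZMod.val_injective _ (hη.pow_inj (ZMod.val_lt _) (ZMod.val_lt _) huv))
  · obtain ⟨i, hid, hi, rfl⟩ :=
      hη.isPrimitiveRoot_iff.mp ((mem_primitiveRoots (NeZero.pos d)).mp hξ)
    refine ⟨ZMod.unitOfCoprime i hi, mem_coe.mpr (mem_univ _), ?_⟩
    simp [ZMod.val_natCast, Nat.mod_eq_of_lt hid]

theorem MonoidHom.card_smul_sum_comp_of_surjective {G H M : Type*} [Group G] [Group H]
    [Fintype G] [Fintype H] [AddCommMonoid M] (f : G →* H) (hf : Function.Surjective f)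
    (F : H → M) : Fintype.card H • ∑ g, F (f g) = Fintype.card G • ∑ h, F h := by
  classical
  set c := #{g | f g = 1}
  have hfiber : ∀ h, #{g | f g = h} = c := fun h =>
    MonoidHom.card_fiber_eq_of_mem_range f (hf h) (hf 1)
  have hsum : ∑ g, F (f g) = c • ∑ h, F h := by
    rw [← sum_fiberwise univ f, smul_sum]
    refine sum_congr rfl fun h _ => ?_
    rw [sum_congr rfl fun g hg => by rw [(mem_filter.mp hg).2], sum_const, hfiber]
  have hcard : Fintype.card G = Fintype.card H * c := by
    rw [← card_univ, card_eq_sum_card_fiberwise (f := f) (t := univ) (by simp)]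
    simp [hfiber]
  rw [hsum, hcard, smul_smul]

theorem Nat.minFac_le_totient_add_one {n d : ℕ} (hdn : d ∣ n) (hd : 1 < d) :
    n.minFac ≤ φ d + 1 := by
  have hq := minFac_prime hd.ne'
  have hqd : φ d.minFac ∣ φ d := totient_dvd_of_dvd (minFac_dvd d)
  rw [totient_prime hq] at hqd
  have := minFac_le_of_dvd hq.two_le ((minFac_dvd d).trans hdn)
  have := le_of_dvd (totient_pos.mpr (by omega)) hqd
  omega

/-- For an `n`-th root of unity `x` this is the trace of `x` from `ℚ(ζₙ)` to `ℚ`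
(a Ramanujan sum). -/
noncomputable def cyclotomicTrace (n : ℕ) [NeZero n] (x : ℂ) : ℂ :=
  ∑ u : (ZMod n)ˣ, x ^ (u : ZMod n).val

theorem cyclotomicTrace_one (n : ℕ) [NeZero n] : cyclotomicTrace n 1 = φ n := by
  simp [cyclotomicTrace, ZMod.card_units_eq_totient]

theorem totient_mul_cyclotomicTrace {n d : ℕ} [NeZero n] {x : ℂ} (hx : IsPrimitiveRoot x d)
    (hdn : d ∣ n) : (φ d : ℂ) * cyclotomicTrace n x = φ n * μ d := by
  have : NeZero d := ⟨ne_zero_of_dvd_ne_zero (NeZero.ne n) hdn⟩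
  have hpow : ∀ u : (ZMod n)ˣ,
      x ^ (u : ZMod n).val = x ^ (ZMod.unitsMap hdn u : ZMod d).val := by
    intro u
    rw [ZMod.unitsMap_val, ZMod.cast_eq_val, ZMod.val_natCast]
    exact pow_eq_pow_of_modEq (Nat.mod_modEq _ _).symm hx.pow_eq_one
  have := (ZMod.unitsMap hdn).card_smul_sum_comp_of_surjective (ZMod.unitsMap_surjective hdn)
    fun v => x ^ (v : ZMod d).val
  simp only [nsmul_eq_mul, ZMod.card_units_eq_totient] at this
  rw [cyclotomicTrace, sum_congr rfl fun u _ => hpow u, this,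
    hx.sum_units_pow_val_eq_sum_primitiveRoots, Complex.sum_primitiveRoots_eq_moebius]

theorem minFac_sub_one_mul_norm_cyclotomicTrace_le {n : ℕ} [NeZero n] {x : ℂ}
    (hxn : x ^ n = 1) (hx1 : x ≠ 1) :
    ((n.minFac : ℝ) - 1) * ‖cyclotomicTrace n x‖ ≤ φ n := by
  have hdn : orderOf x ∣ n := orderOf_dvd_of_pow_eq_one hxn
  have hd : 1 < orderOf x := by
    have := Nat.pos_of_dvd_of_pos hdn (NeZero.pos n)
    have := mt orderOf_eq_one_iff.mp hx1
    omega
  have hmoebius : ‖(μ (orderOf x) : ℂ)‖ ≤ 1 := by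
    rw [Complex.norm_intCast]
    exact_mod_cast abs_moebius_le_one
  calc ((n.minFac : ℝ) - 1) * ‖cyclotomicTrace n x‖
      ≤ φ (orderOf x) * ‖cyclotomicTrace n x‖ := by
        gcongr
        rw [sub_le_iff_le_add]
        exact_mod_cast Nat.minFac_le_totient_add_one hdn hd
    _ = φ n * ‖(μ (orderOf x) : ℂ)‖ := by
        simpa using congrArg norm (totient_mul_cyclotomicTrace (IsPrimitiveRoot.orderOf x) hdn)
    _ ≤ φ n := mul_le_of_le_one_right (by positivity) hmoebius

section VanishingSums

variable {ι : Type*} {s : Finset ι} {x : ι → ℂ} {n : ℕ} [NeZero n]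

theorem sum_pow_eq_zero_of_coprime (hx : ∀ i ∈ s, x i ^ n = 1) (hsum : ∑ i ∈ s, x i = 0)
    {t : ℕ} (ht : t.Coprime n) : ∑ i ∈ s, x i ^ t = 0 := by
  obtain ⟨ζ, hζ⟩ : ∃ ζ : ℂ, IsPrimitiveRoot ζ n := ⟨_, Complex.isPrimitiveRoot_exp n (NeZero.ne n)⟩
  choose! e he using fun i hi => (hζ.eq_pow_of_pow_eq_one (hx i hi)).imp fun _ h => h.2
  set f : ℚ[X] := ∑ i ∈ s, X ^ e i
  have hf : ∀ ξ : ℂ, aeval ξ f = ∑ i ∈ s, ξ ^ e i := fun ξ => by simp [f]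
  have hfζ : minpoly ℚ (ζ ^ t) ∣ f := by
    rw [← cyclotomic_eq_minpoly_rat (hζ.pow_of_coprime t ht) (NeZero.pos n),
      cyclotomic_eq_minpoly_rat hζ (NeZero.pos n), minpoly.dvd_iff, hf, ← hsum]
    exact sum_congr rfl fun i hi => he i hi
  rw [minpoly.dvd_iff, hf] at hfζ
  rw [← hfζ]
  exact sum_congr rfl fun i hi => by rw [← he i hi, ← pow_mul, ← pow_mul, mul_comm]

theorem sum_cyclotomicTrace_eq_zero (hx : ∀ i ∈ s, x i ^ n = 1) (hsum : ∑ i ∈ s, x i = 0) :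
    ∑ i ∈ s, cyclotomicTrace n (x i) = 0 := by
  simp only [cyclotomicTrace]
  rw [sum_comm]
  exact sum_eq_zero fun u _ =>
    sum_pow_eq_zero_of_coprime hx hsum (ZMod.val_coe_unit_coprime u)

theorem minFac_le_card_of_sum_eq_zero (hs : s.Nonempty) (hx : ∀ i ∈ s, x i ^ n = 1)
    (hsum : ∑ i ∈ s, x i = 0) : n.minFac ≤ #s := by
  classical
  obtain ⟨i₀, hi₀⟩ := hs
  have hx₀ : x i₀ ≠ 0 := fun h => by simpa [h, NeZero.ne n] using hx i₀ hi₀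
  set y := fun i => x i / x i₀
  have hy : ∀ i ∈ s, y i ^ n = 1 := fun i hi => by simp [y, div_pow, hx i hi, hx i₀ hi₀]
  have htrace := sum_cyclotomicTrace_eq_zero hy (by simp [y, ← sum_div, hsum])
  rw [← sum_filter_add_sum_filter_not s (y · = 1),
    sum_congr rfl fun i hi => by rw [(mem_filter.mp hi).2], sum_const, cyclotomicTrace_one,
    nsmul_eq_mul, add_eq_zero_iff_eq_neg] at htrace
  set A := s.filter (y · = 1)
  set B := s.filter (¬ y · = 1)
  have hA : 1 ≤ #A := card_pos.mpr ⟨i₀, mem_filter.mpr ⟨hi₀, div_self hx₀⟩⟩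
  have hAB : #A + #B = #s := card_filter_add_card_filter_not _
  replace htrace : (#A : ℝ) * φ n = ‖∑ i ∈ B, cyclotomicTrace n (y i)‖ := by
    rw [← norm_neg, ← htrace]
    simp
  have hφ : (0 : ℝ) < φ n := by exact_mod_cast Nat.totient_pos.mpr (NeZero.pos n)
  have hp : (1 : ℝ) ≤ n.minFac := by exact_mod_cast Nat.minFac_pos n
  have hbound : ((n.minFac : ℝ) - 1) * #A * φ n ≤ #B * φ n :=
    calc ((n.minFac : ℝ) - 1) * #A * φ n
        = ((n.minFac : ℝ) - 1) * ‖∑ i ∈ B, cyclotomicTrace n (y i)‖ := by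
          rw [mul_assoc, htrace]
      _ ≤ ∑ i ∈ B, ((n.minFac : ℝ) - 1) * ‖cyclotomicTrace n (y i)‖ := by
          rw [← mul_sum]
          exact mul_le_mul_of_nonneg_left (norm_sum_le _ _) (by linarith)
      _ ≤ #B * φ n := by
          rw [← nsmul_eq_mul, ← sum_const]
          exact sum_le_sum fun i hi => minFac_sub_one_mul_norm_cyclotomicTrace_le
            (hy i (mem_filter.mp hi).1) (mem_filter.mp hi).2
  have : ((n.minFac : ℝ) - 1) * #A ≤ #B := le_of_mul_le_mul_right hbound hφ
  have : (n.minFac : ℝ) ≤ #s := by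
    rw [← hAB]
    push_cast
    nlinarith [(by exact_mod_cast hA : (1 : ℝ) ≤ #A)]
  exact_mod_cast this

end VanishingSums

theorem Int.natCast_modEq_iff_mod_eq {k m : ℕ} (hm : m ≠ 0) (a : ℤ) :
    (k : ℤ) ≡ a [ZMOD m] ↔ k % m = (a % m).toNat := by
  rw [Int.ModEq, ← Int.toNat_of_nonneg (Int.emod_nonneg a (by exact_mod_cast hm)),
    ← Int.natCast_mod]
  exact Nat.cast_inj

theorem Finset.sum_range_filter_mod_eq {R : Type*} [AddCommMonoid R] {M m b : ℕ} (hmM : m ∣ M)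
    (hb : b < m) (f : ℕ → R) :
    ∑ k ∈ range M with k % m = b, f k = ∑ j ∈ range (M / m), f (b + j * m) := by
  have hm : 0 < m := by omega
  symm
  refine sum_nbij' (b + · * m) (· / m) (fun j hj => ?_) (fun k hk => ?_) (fun j _ => ?_)
    (fun k hk => ?_) (fun _ _ => rfl)
  · simp only [mem_range, mem_filter] at hj ⊢
    obtain ⟨q, rfl⟩ := hmM
    rw [Nat.mul_div_cancel_left q hm] at hj
    refine ⟨by nlinarith, ?_⟩
    rw [Nat.add_mul_mod_self_right, Nat.mod_eq_of_lt hb]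
  · simp only [mem_range, mem_filter] at hk ⊢
    exact Nat.div_lt_div_of_lt_of_dvd hmM hk.1
  · simp [Nat.add_mul_div_right b j hm, Nat.div_eq_of_lt hb]
  · simp only [mem_range, mem_filter] at hk
    simp only [← hk.2, Nat.mod_add_div']

theorem geom_sum_eq_zero_of_pow_eq_one {K : Type*} [Field K] {x : K} (hx : x ≠ 1) {n : ℕ}
    (hxn : x ^ n = 1) : ∑ k ∈ range n, x ^ k = 0 := by
  rw [geom_sum_eq hx, hxn, sub_self, zero_div]

def IsExactCover {ι : Type*} (a : ι → ℤ) (m : ι → ℕ) : Prop :=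
  ∀ x : ℤ, ∃! i, x ≡ a i [ZMOD m i]

namespace IsExactCover

variable {ι : Type*} [Fintype ι] {a : ι → ℤ} {m : ι → ℕ}

theorem sum_range (h : IsExactCover a m) (hm : ∀ i, m i ≠ 0) {M : ℕ} (hmM : ∀ i, m i ∣ M)
    {R : Type*} [AddCommMonoid R] (f : ℕ → R) :
    ∑ k ∈ range M, f k = ∑ i, ∑ j ∈ range (M / m i), f ((a i % m i).toNat + j * m i) := by
  classical
  have hpart : range M =
      univ.biUnion fun i => (range M).filter fun k : ℕ => (k : ℤ) ≡ a i [ZMOD m i] := by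
    ext k
    simpa using fun _ => (h k).exists
  rw [hpart, sum_biUnion]
  · refine sum_congr rfl fun i _ => ?_
    simp_rw [Int.natCast_modEq_iff_mod_eq (hm i)]
    have := hm i
    have := Int.emod_lt_of_pos (a i) (by omega : (0 : ℤ) < m i)
    exact sum_range_filter_mod_eq (hmM i) (by omega) f
  · intro i _ j _ hij
    simp only [Function.onFun]
    rw [disjoint_filter]
    exact fun k _ hki hkj => hij ((h k).unique hki hkj)

theorem sum_pow_eq_zero (h : IsExactCover a m) (hm : ∀ i, m i ≠ 0) {M : ℕ} (hM : M ≠ 0)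
    (hmM : ∀ i, m i ∣ M) {n : ℕ} (hn : 1 < n) (hnM : n ∣ M) (hmn : ∀ i, m i ≤ n) {ζ : ℂ}
    (hζ : IsPrimitiveRoot ζ n) :
    ∑ i with m i = n, ζ ^ (a i % m i).toNat = 0 := by
  have hζM : ζ ^ M = 1 := (hζ.pow_eq_one_iff_dvd M).mpr hnM
  have hclass : ∀ i, ∑ j ∈ range (M / m i), ζ ^ ((a i % m i).toNat + j * m i) =
      if m i = n then ((M / n : ℕ) : ℂ) * ζ ^ (a i % m i).toNat else 0 := by
    intro i
    simp_rw [pow_add, pow_mul', ← mul_sum]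
    split_ifs with hin
    · simp [hin, hζ.pow_eq_one, mul_comm]
    · rw [geom_sum_eq_zero_of_pow_eq_one, mul_zero]
      · exact fun h1 => hin (le_antisymm (hmn i)
          (Nat.le_of_dvd (Nat.pos_of_ne_zero (hm i)) ((hζ.pow_eq_one_iff_dvd _).mp h1)))
      · rw [← pow_mul, Nat.mul_div_cancel' (hmM i), hζM]
  have := geom_sum_eq_zero_of_pow_eq_one (hζ.ne_one hn) hζM
  rw [h.sum_range hm hmM, sum_congr rfl fun i _ => hclass i, ← sum_filter, ← mul_sum] at this
  refine (mul_eq_zero.mp this).resolve_left ?_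
  exact_mod_cast (Nat.div_pos (Nat.le_of_dvd (Nat.pos_of_ne_zero hM) hnM) (by omega)).ne'

end IsExactCover

theorem znam_general (N : ℕ) (a : Fin N → ℤ) (m : Fin N → ℕ) (hm : ∀ i, 1 ≤ m i)
    (M : ℕ) (hM : M = Finset.univ.lcm m) (hM2 : 2 ≤ M)
    (p : ℕ)
    (hpmin : ∀ q : ℕ, q.Prime → q ∣ M → p ≤ q)
    (hdisj : ∀ i j : Fin N, i ≠ j → ∀ x : ℤ,
      x ≡ a i [ZMOD (m i : ℤ)] → x ≡ a j [ZMOD (m j : ℤ)] → False)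
    (hcover : ∀ x : ℤ, ∃ i : Fin N, x ≡ a i [ZMOD (m i : ℤ)]) :
    p ≤ (Finset.univ.filter (fun i : Fin N => ∀ j, m j ≤ m i)).card := by
  have hexact : IsExactCover a m := fun x => (hcover x).elim fun i hi =>
    ⟨i, hi, fun j hj => by_contra fun hji => hdisj j i hji x hj hi⟩
  have hmM : ∀ i, m i ∣ M := fun i => hM ▸ dvd_lcm (mem_univ i)
  obtain ⟨i, -⟩ := hcover 0
  obtain ⟨i₀, -, hmax⟩ := exists_max_image univ m ⟨i, mem_univ i⟩
  set n := m i₀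
  have hn : 1 < n := by
    by_contra! hn
    have : M ∣ 1 := hM ▸ lcm_dvd fun i _ =>
      Nat.dvd_one.mpr (le_antisymm ((hmax i (mem_univ i)).trans hn) (hm i))
    have := Nat.le_of_dvd one_pos this
    omega
  have : NeZero n := ⟨by omega⟩
  obtain ⟨ζ, hζ⟩ : ∃ ζ : ℂ, IsPrimitiveRoot ζ n := ⟨_, Complex.isPrimitiveRoot_exp n (NeZero.ne n)⟩
  have hsum := hexact.sum_pow_eq_zero (fun i => by have := hm i; omega) (by omega) hmM hn
    (hmM i₀) (fun i => hmax i (mem_univ i)) hζ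
  have hcard : n.minFac ≤ #{i | m i = n} :=
    minFac_le_card_of_sum_eq_zero ⟨i₀, mem_filter.mpr ⟨mem_univ _, rfl⟩⟩
      (fun i _ => by rw [← pow_mul, mul_comm, pow_mul, hζ.pow_eq_one, one_pow]) hsum
  have hmax_iff : ∀ i, (∀ j, m j ≤ m i) ↔ m i = n := fun i =>
    ⟨fun h => le_antisymm (hmax i (mem_univ i)) (h i₀), fun h j => h ▸ hmax j (mem_univ j)⟩
  simp_rw [hmax_iff]
  exact (hpmin _ (Nat.minFac_prime (by omega)) ((Nat.minFac_dvd n).trans (hmM i₀))).trans hcard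

/-- Znám's theorem: in an exact covering system with M = lcm of the moduli at
least 2, and p the smallest prime dividing M, the largest modulus is attained
by at least p of the residue classes. -/
theorem znam (N : ℕ) (a : Fin N → ℤ) (m : Fin N → ℕ) (hm : ∀ i, 1 ≤ m i)
    (M : ℕ) (hM : M = Finset.univ.lcm m) (hM2 : 2 ≤ M)
    (p : ℕ) (hp : p.Prime) (hpM : p ∣ M)
    (hpmin : ∀ q : ℕ, q.Prime → q ∣ M → p ≤ q)
    (hdisj : ∀ i j : Fin N, i ≠ j → ∀ x : ℤ,
      x ≡ a i [ZMOD (m i : ℤ)] → x ≡ a j [ZMOD (m j : ℤ)] → False)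
    (hcover : ∀ x : ℤ, ∃ i : Fin N, x ≡ a i [ZMOD (m i : ℤ)]) :
    p ≤ (Finset.univ.filter (fun i : Fin N => ∀ j, m j ≤ m i)).card :=
  znam_general N a m hm M hM hM2 p hpmin hdisj hcover
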